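/- The function f(x) = x/sqrt(1-x^2) belongs to L^p(-1,1) for every 1 < p < 2 but not to L^2(-1,1), and its finite Hilbert transform satisfies T(f)(t) = 1 for almost every t ∈ (-1,1). -/

import Mathlib

/-!
For `f x = x / w x` we have `|f x|^p ≤ (1 - x²)^(-p/2) ≤ (1 - x)^(-p/2) + (1 + x)^(-p/2)`, which is
integrable as long as `p / 2 < 1`. Conversely `f² + 1 = 1 / (1 - x²)` dominates
`1 / (2 (1 - x))`, which is not integrable at `1`.

For the Hilbert transform, `x / (w x (x - t)) = 1 / w x + t / (w x (x - t))` has the explicit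
primitive `arcsin x + (t / w t) log |(x - t) / (1 - t x + w t w x)|`. Its only singularity is
`(t / w t) log |x - t|`, which takes the same value at `t - ε` and `t + ε` and so drops out of the
principal value; what is left is continuous, and in the limit only
`arcsin 1 - arcsin (-1) = π` survives.
-/

open MeasureTheory Set Filter
open scoped ENNReal

noncomputable section

def w (x : ℝ) : ℝ := Real.sqrt (1 - x ^ 2)

def μ1 : Measure ℝ := volume.restrict (Set.Ioo (-1 : ℝ) 1)

/-- The truncated principal value integral `(1/π) ∫_{(-1,1)\(t-ε,t+ε)} f(x)/(x-t) dx`. -/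
def pvIntegral (f : ℝ → ℝ) (t ε : ℝ) : ℝ :=
  (1 / Real.pi) * ∫ x in Set.Ioo (-1 : ℝ) 1 \ Set.Ioo (t - ε) (t + ε), f x / (x - t)

/-- `l` is the value of the finite Hilbert transform of `f` at `t`. -/
def HasFHTAt (f : ℝ → ℝ) (t l : ℝ) : Prop :=
  Filter.Tendsto (fun ε => pvIntegral f t ε) (nhdsWithin 0 (Set.Ioi 0)) (nhds l)

open Topology

lemma Ioo_diff_Ioo_eq_Ioc_union_Ico {a l r b : ℝ} (har : a < r) (hlb : l < b) :
    Ioo a b \ Ioo l r = Ioc a l ∪ Ico r b := by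
  ext x
  simp only [Set.mem_sdiff, mem_Ioo, mem_union, mem_Ioc, mem_Ico]
  constructor
  · rintro ⟨⟨hax, hxb⟩, hx⟩
    by_cases hlx : l < x
    · exact Or.inr ⟨not_lt.1 fun h => hx ⟨hlx, h⟩, hxb⟩
    · exact Or.inl ⟨hax, not_lt.1 hlx⟩
  · rintro (⟨hax, hxl⟩ | ⟨hrx, hxb⟩)
    · exact ⟨⟨hax, hxl.trans_lt hlb⟩, fun h => (h.1.trans_le hxl).false⟩
    · exact ⟨⟨har.trans_le hrx, hxb⟩, fun h => (h.2.trans_le hrx).false⟩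

theorem integral_Ioo_diff_Ioo_eq_of_hasDerivAt {F g : ℝ → ℝ} {a l r b : ℝ} (hal : a < l)
    (hlr : l < r) (hrb : r < b) (hFl : ContinuousOn F (Icc a l)) (hFr : ContinuousOn F (Icc r b))
    (hderiv : ∀ x ∈ Ioo a l ∪ Ioo r b, HasDerivAt F (g x) x)
    (hg : IntegrableOn g (Ioo a b \ Ioo l r)) :
    ∫ x in Ioo a b \ Ioo l r, g x = F l - F a + (F b - F r) := by
  rw [Ioo_diff_Ioo_eq_Ioc_union_Ico (hal.trans hlr) (hlr.trans hrb)] at hg ⊢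
  have hdisj : Disjoint (Ioc a l) (Ico r b) :=
    disjoint_left.2 fun x hx hx' => (hx.2.trans_lt hlr).not_ge hx'.1
  rw [setIntegral_union hdisj measurableSet_Ico (hg.mono_set subset_union_left)
    (hg.mono_set subset_union_right), integral_Ico_eq_integral_Ioo,
    ← integral_Ioc_eq_integral_Ioo, ← intervalIntegral.integral_of_le hal.le,
    ← intervalIntegral.integral_of_le hrb.le]
  congr 1
  · refine intervalIntegral.integral_eq_sub_of_hasDerivAt_of_le hal.le hFl
      (fun x hx => hderiv x (Or.inl hx)) ?_
    exact (intervalIntegrable_iff_integrableOn_Ioo_of_le hal.le).2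
      (hg.mono_set (Ioo_subset_Ioc_self.trans subset_union_left))
  · refine intervalIntegral.integral_eq_sub_of_hasDerivAt_of_le hrb.le hFr
      (fun x hx => hderiv x (Or.inr hx)) ?_
    exact (intervalIntegrable_iff_integrableOn_Ioo_of_le hrb.le).2
      (hg.mono_set (Ioo_subset_Ico_self.trans subset_union_right))

/-- Since `Real.log` is even, `c * Real.log (y - t)` is `c log |y - t|`: its values at `t ± ε`
cancel, and the principal value only sees the continuous part `G`. -/
theorem tendsto_integral_Ioo_diff_Ioo_of_hasDerivAt {g G : ℝ → ℝ} {a b t c : ℝ} (hat : a < t)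
    (htb : t < b) (hG : ContinuousOn G (Icc a b))
    (hderiv : ∀ x ∈ Ioo a b, x ≠ t → HasDerivAt (fun y => G y + c * Real.log (y - t)) (g x) x)
    (hg : ∀ ε > 0, IntegrableOn g (Ioo a b \ Ioo (t - ε) (t + ε))) :
    Tendsto (fun ε => ∫ x in Ioo a b \ Ioo (t - ε) (t + ε), g x) (𝓝[>] 0)
      (𝓝 (G b + c * Real.log (b - t) - (G a + c * Real.log (a - t)))) := by
  set F : ℝ → ℝ := fun y => G y + c * Real.log (y - t)
  have hF : ∀ {s}, s ⊆ Icc a b → t ∉ s → ContinuousOn F s := fun hs ht =>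
    (hG.mono hs).add (continuousOn_const.mul ((continuousOn_id.sub continuousOn_const).log
      fun x hx => sub_ne_zero.2 (ne_of_mem_of_not_mem hx ht)))
  have hpv : ∀ ε ∈ Ioo 0 (min (t - a) (b - t)),
      ∫ x in Ioo a b \ Ioo (t - ε) (t + ε), g x = F b - F a + (G (t - ε) - G (t + ε)) := by
    rintro ε ⟨hε, hεt⟩
    have hεa : ε < t - a := hεt.trans_le (min_le_left _ _)
    have hεb : ε < b - t := hεt.trans_le (min_le_right _ _)
    rw [integral_Ioo_diff_Ioo_eq_of_hasDerivAt (F := F) (by linarith) (by linarith) (by linarith)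
      (hF (Icc_subset_Icc le_rfl (by linarith)) fun h => by linarith [h.2])
      (hF (Icc_subset_Icc (by linarith) le_rfl) fun h => by linarith [h.1])
      (fun x hx => hderiv x ?_ ?_) (hg ε hε)]
    · simp only [F, show t - ε - t = -ε by ring, show t + ε - t = ε by ring, Real.log_neg_eq_log]
      ring
    · rcases hx with hx | hx
      · exact ⟨hx.1, by linarith [hx.2]⟩
      · exact ⟨by linarith [hx.1], hx.2⟩
    · rcases hx with hx | hx
      · linarith [hx.2]
      · linarith [hx.1]
  have hGt : ContinuousAt G t := hG.continuousAt (Icc_mem_nhds hat htb)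
  have hlim : Tendsto (fun ε => F b - F a + (G (t - ε) - G (t + ε))) (𝓝 0) (𝓝 (F b - F a)) := by
    have hl : Tendsto (fun ε : ℝ => t - ε) (𝓝 0) (𝓝 t) := by
      simpa using (tendsto_const_nhds (x := t)).sub (tendsto_id (x := 𝓝 (0 : ℝ)))
    have hr : Tendsto (fun ε : ℝ => t + ε) (𝓝 0) (𝓝 t) := by
      simpa using (tendsto_const_nhds (x := t)).add (tendsto_id (x := 𝓝 (0 : ℝ)))
    simpa using tendsto_const_nhds.add ((hGt.tendsto.comp hl).sub (hGt.tendsto.comp hr))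
  refine (hlim.mono_left nhdsWithin_le_nhds).congr' ?_
  filter_upwards [Ioo_mem_nhdsGT (lt_min (sub_pos.2 hat) (sub_pos.2 htb))] with ε hε
  exact (hpv ε hε).symm

lemma integrableOn_div_sub_of_le_abs {g : ℝ → ℝ} {s : Set ℝ} {t ε : ℝ} (hε : 0 < ε)
    (hg : IntegrableOn g s) (hs : MeasurableSet s) (hfar : ∀ x ∈ s, ε ≤ |x - t|) :
    IntegrableOn (fun x => g x / (x - t)) s := by
  simp_rw [div_eq_mul_inv]
  refine hg.mul_bdd (c := ε⁻¹) (by fun_prop) ((ae_restrict_iff' hs).2 (ae_of_all _ fun x hx => ?_))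
  rw [norm_inv, Real.norm_eq_abs]
  exact inv_anti₀ hε (hfar x hx)

lemma one_sub_sq_rpow_le {r x : ℝ} (hr : r ≤ 0) (hx : x ∈ Ioo (-1 : ℝ) 1) :
    (1 - x ^ 2) ^ r ≤ (1 - x) ^ r + (1 + x) ^ r := by
  obtain ⟨hx1, hx2⟩ := hx
  have h1 : 0 ≤ (1 - x) ^ r := Real.rpow_nonneg (by linarith) r
  have h2 : 0 ≤ (1 + x) ^ r := Real.rpow_nonneg (by linarith) r
  rcases le_total 0 x with hx0 | hx0
  · have := Real.rpow_le_rpow_of_nonpos (by linarith) (by nlinarith : 1 - x ≤ 1 - x ^ 2) hr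
    linarith
  · have := Real.rpow_le_rpow_of_nonpos (by linarith) (by nlinarith : 1 + x ≤ 1 - x ^ 2) hr
    linarith

lemma integrableOn_one_sub_sq_rpow {r : ℝ} (hr : -1 < r) (hr0 : r ≤ 0) :
    IntegrableOn (fun x : ℝ => (1 - x ^ 2) ^ r) (Ioo (-1) 1) := by
  have hpow := intervalIntegral.intervalIntegrable_rpow' hr (a := 0) (b := 2)
  have hleft : IntervalIntegrable (fun x : ℝ => (1 - x) ^ r) volume (-1) 1 := by
    simpa [show (1 : ℝ) - 2 = -1 by norm_num] using (hpow.comp_sub_left 1).symm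
  have hright : IntervalIntegrable (fun x : ℝ => (1 + x) ^ r) volume (-1) 1 := by
    simpa [add_comm, show (2 : ℝ) - 1 = 1 by norm_num] using hpow.comp_add_right 1
  refine Integrable.mono' ((hleft.add hright).1.mono_set Ioo_subset_Ioc_self)
    (by fun_prop : Measurable _).aestronglyMeasurable
    ((ae_restrict_iff' measurableSet_Ioo).2 (ae_of_all _ fun x hx => ?_))
  rw [Real.norm_of_nonneg (Real.rpow_nonneg (by nlinarith [hx.1, hx.2]) r)]
  exact one_sub_sq_rpow_le hr0 hx

lemma w_pos {x : ℝ} (hx : x ∈ Ioo (-1 : ℝ) 1) : 0 < w x :=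
  Real.sqrt_pos.2 (by nlinarith [hx.1, hx.2])

lemma hasDerivAt_w {x : ℝ} (hx : x ∈ Ioo (-1 : ℝ) 1) : HasDerivAt w (-x / w x) x := by
  have h := ((hasDerivAt_pow 2 x).const_sub 1).sqrt (by nlinarith [hx.1, hx.2] : 1 - x ^ 2 ≠ 0)
  refine h.congr_deriv ?_
  rw [w]
  field_simp
  ring

lemma norm_div_w_le_rpow {x : ℝ} (hx : x ∈ Ioo (-1 : ℝ) 1) :
    ‖x / w x‖ ≤ (1 - x ^ 2) ^ (-(1 / 2 : ℝ)) := by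
  rw [Real.rpow_neg (by nlinarith [hx.1, hx.2]), ← Real.sqrt_eq_rpow, w, Real.norm_eq_abs,
    abs_div, abs_of_nonneg (Real.sqrt_nonneg _), div_eq_mul_inv]
  exact mul_le_of_le_one_left (inv_nonneg.2 (Real.sqrt_nonneg _)) (abs_le.2 ⟨hx.1.le, hx.2.le⟩)

lemma sq_div_w_add_one {x : ℝ} (hx : x ∈ Ioo (-1 : ℝ) 1) :
    (x / w x) ^ 2 + 1 = (1 - x ^ 2)⁻¹ := by
  have hpos : 0 < 1 - x ^ 2 := by nlinarith [hx.1, hx.2]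
  rw [div_pow, w, Real.sq_sqrt hpos.le]
  field_simp
  ring

instance : IsFiniteMeasure μ1 := by
  unfold μ1
  infer_instance

lemma memLp_x_div_w {p : ℝ} (hp0 : 0 < p) (hp2 : p < 2) :
    MemLp (fun x => x / w x) (ENNReal.ofReal p) μ1 := by
  have hmeas : AEStronglyMeasurable (fun x => x / w x) μ1 :=
    (by unfold w; fun_prop : Measurable _).aestronglyMeasurable
  rw [← integrable_norm_rpow_iff hmeas (by simpa using hp0) ENNReal.ofReal_ne_top,
    ENNReal.toReal_ofReal hp0.le]
  refine (integrableOn_one_sub_sq_rpow (r := -(1 / 2) * p) (by linarith) (by linarith)).mono'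
    (by unfold w; fun_prop : Measurable _).aestronglyMeasurable
    ((ae_restrict_iff' measurableSet_Ioo).2 (ae_of_all _ fun x hx => ?_))
  rw [Real.norm_of_nonneg (by positivity), Real.rpow_mul (by nlinarith [hx.1, hx.2])]
  exact Real.rpow_le_rpow (norm_nonneg _) (norm_div_w_le_rpow hx) hp0.le

lemma integrableOn_x_div_w : IntegrableOn (fun x => x / w x) (Ioo (-1) 1) := by
  have h : MemLp (fun x => x / w x) 1 μ1 := by simpa using memLp_x_div_w one_pos one_lt_two
  exact memLp_one_iff_integrable.1 h

lemma not_memLp_two_x_div_w : ¬ MemLp (fun x => x / w x) 2 μ1 := by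
  intro h
  have hsq : Integrable (fun x => 2 * ((x / w x) ^ 2 + 1)) μ1 :=
    (h.integrable_sq.add (integrable_const 1)).const_mul 2
  have hinv : IntegrableOn (fun x : ℝ => (x - 1)⁻¹) (Ioo (-1) 1) := by
    refine hsq.mono' (by fun_prop)
      ((ae_restrict_iff' measurableSet_Ioo).2 (ae_of_all _ fun x hx => ?_))
    obtain ⟨hx1, hx2⟩ := hx
    rw [sq_div_w_add_one ⟨hx1, hx2⟩, norm_inv, Real.norm_of_nonpos (by linarith), neg_sub,
      ← div_eq_mul_inv, inv_le_iff_one_le_mul₀' (by linarith), ← mul_div_assoc,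
      le_div_iff₀ (by nlinarith)]
    nlinarith
  have := intervalIntegrable_sub_inv_iff.1
    ((intervalIntegrable_iff_integrableOn_Ioo_of_le (by norm_num)).2 hinv)
  norm_num at this

def fhtDenom (t x : ℝ) : ℝ := 1 - t * x + w t * w x

lemma fhtDenom_pos {t x : ℝ} (ht : t ∈ Ioo (-1 : ℝ) 1) (hx : x ∈ Icc (-1 : ℝ) 1) :
    0 < fhtDenom t x := by
  obtain ⟨ht1, ht2⟩ := ht
  obtain ⟨hx1, hx2⟩ := hx
  have : 0 < 1 - t * x := by
    nlinarith [mul_nonneg (by linarith : (0 : ℝ) ≤ 1 - t) (by linarith : (0 : ℝ) ≤ 1 + x),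
      mul_nonneg (by linarith : (0 : ℝ) ≤ 1 + t) (by linarith : (0 : ℝ) ≤ 1 - x)]
  have : 0 ≤ w t * w x := mul_nonneg (Real.sqrt_nonneg _) (Real.sqrt_nonneg _)
  unfold fhtDenom
  linarith

lemma continuous_fhtDenom (t : ℝ) : Continuous (fhtDenom t) := by
  unfold fhtDenom w
  fun_prop

lemma hasDerivAt_log_sub_log_fhtDenom {t x : ℝ} (ht : t ∈ Ioo (-1 : ℝ) 1)
    (hx : x ∈ Ioo (-1 : ℝ) 1) (hxt : x ≠ t) :
    HasDerivAt (fun y => Real.log (y - t) - Real.log (fhtDenom t y)) (w t / (w x * (x - t))) x := by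
  have hD := fhtDenom_pos ht (Ioo_subset_Icc_self hx)
  have hwx := w_pos hx
  have hxt' : x - t ≠ 0 := sub_ne_zero.2 hxt
  have hD' : HasDerivAt (fhtDenom t) (-t + w t * (-x / w x)) x :=
    ((((hasDerivAt_id' x).const_mul t).const_sub 1).add
      ((hasDerivAt_w hx).const_mul (w t))).congr_deriv (by ring)
  refine ((((hasDerivAt_id' x).sub_const t).log hxt').sub (hD'.log hD.ne')).congr_deriv ?_
  have hwx2 : w x ^ 2 = 1 - x ^ 2 := Real.sq_sqrt (by nlinarith [hx.1, hx.2])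
  have hwt2 : w t ^ 2 = 1 - t ^ 2 := Real.sq_sqrt (by nlinarith [ht.1, ht.2])
  have hD2 : 1 - x * t + w t * w x ≠ 0 := by rw [mul_comm x t]; exact hD.ne'
  unfold fhtDenom
  field_simp
  linear_combination w t * hwx2 - w x * hwt2

theorem hasFHTAt_x_div_w {t : ℝ} (ht : t ∈ Ioo (-1 : ℝ) 1) : HasFHTAt (fun x => x / w x) t 1 := by
  set c := t / w t
  set G : ℝ → ℝ := fun y => Real.arcsin y - c * Real.log (fhtDenom t y)
  have hG : ContinuousOn G (Icc (-1) 1) :=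
    Real.continuous_arcsin.continuousOn.sub (continuousOn_const.mul
      ((continuous_fhtDenom t).continuousOn.log fun x hx => (fhtDenom_pos ht hx).ne'))
  have hderiv : ∀ x ∈ Ioo (-1) 1, x ≠ t →
      HasDerivAt (fun y => G y + c * Real.log (y - t)) (x / w x / (x - t)) x := by
    intro x hx hxt
    have h := (Real.hasDerivAt_arcsin hx.1.ne' hx.2.ne).add
      ((hasDerivAt_log_sub_log_fhtDenom ht hx hxt).const_mul c)
    have hfun : (fun y => G y + c * Real.log (y - t))
        = Real.arcsin + fun y => c * (Real.log (y - t) - Real.log (fhtDenom t y)) := by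
      funext y
      simp only [G, Pi.add_apply]
      ring
    rw [hfun]
    refine h.congr_deriv ?_
    have := (w_pos hx).ne'
    have := (w_pos ht).ne'
    have := sub_ne_zero.2 hxt
    change 1 / w x + _ = _
    simp only [c]
    field_simp
    ring
  have hint : ∀ ε > 0,
      IntegrableOn (fun x => x / w x / (x - t)) (Ioo (-1) 1 \ Ioo (t - ε) (t + ε)) :=
    fun ε hε => integrableOn_div_sub_of_le_abs hε (integrableOn_x_div_w.mono_set sdiff_subset)
      (measurableSet_Ioo.diff measurableSet_Ioo) fun x hx => not_lt.1 fun h => hx.2 (by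
        rw [abs_sub_lt_iff] at h
        constructor <;> linarith)
  have hlim := tendsto_integral_Ioo_diff_Ioo_of_hasDerivAt ht.1 ht.2 hG hderiv hint
  have hval : G 1 + c * Real.log (1 - t) - (G (-1) + c * Real.log (-1 - t)) = Real.pi := by
    simp only [G, fhtDenom, w, Real.arcsin_one, Real.arcsin_neg_one,
      show (-1 : ℝ) - t = -(1 + t) by ring, Real.log_neg_eq_log]
    norm_num
  rw [hval] at hlim
  simpa [HasFHTAt, pvIntegral, Real.pi_ne_zero] using hlim.const_mul (1 / Real.pi)

/-- `x/√(1-x²)` is in `L^p(-1,1)` for `1 < p < 2`, not in `L^2(-1,1)`,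
and its finite Hilbert transform equals `1` a.e. -/
theorem fht_x_div_w :
    (∀ p : ℝ, 1 < p → p < 2 →
      MemLp (fun x => x / Real.sqrt (1 - x ^ 2)) (ENNReal.ofReal p) μ1) ∧
    ¬ MemLp (fun x => x / Real.sqrt (1 - x ^ 2)) 2 μ1 ∧
    (∀ᵐ t ∂μ1, HasFHTAt (fun x => x / Real.sqrt (1 - x ^ 2)) t 1) :=
  ⟨fun _ hp1 hp2 => memLp_x_div_w (by linarith) hp2, not_memLp_two_x_div_w,
    (ae_restrict_iff' measurableSet_Ioo).2 (ae_of_all _ fun _ ht => hasFHTAt_x_div_w ht)⟩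

end
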